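/- arXiv:math/0012053 — 6 statements merged into one kernel-verified Lean document; each statement's English description precedes it below -/
import Mathlib

section
/- For every real α > 0 and complex numbers A, B, the double integral over ℝ² of e^{2πi(Ax+By)} e^{-πα(x²+y²)} e^{-2πixy} dx dy equals (1/√(α²+1)) exp(−(π/(α²+1)) (αA² + αB² − 2iAB)). -/
/-! Since the cross term `-2πixy` is purely imaginary, the integrand is dominated by a product of
two Gaussians, so Fubini applies. The inner integral over `y` is a one-variable Gaussian with a
complex linear term; completing the square leaves a Gaussian in `x` whose quadratic coefficient
`(4a² + t²) / (4a)` (with `a = πα`, `t = -2π`) is again real and positive, and a second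
one-variable Gaussian integral finishes the computation. -/

open MeasureTheory Complex Real

lemma ofReal_cpow_one_half {x : ℝ} (hx : 0 ≤ x) : (x : ℂ) ^ (1 / 2 : ℂ) = √x := by
  rw [sqrt_eq_rpow, ofReal_cpow hx]
  norm_num

lemma integral_cexp_neg_mul_sq_add_mul {a : ℝ} (ha : 0 < a) (c : ℂ) :
    ∫ x : ℝ, cexp (-a * x ^ 2 + c * x) = √(π / a) * cexp (c ^ 2 / (4 * a)) := by
  have h := integral_cexp_quadratic (b := -(a : ℂ)) (by simpa using ha) c 0
  simp only [add_zero, neg_neg, zero_sub, mul_neg, div_neg] at h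
  rw [h, ← ofReal_div, ofReal_cpow_one_half (by positivity)]

noncomputable def twistedGaussian (a t : ℝ) (c₁ c₂ : ℂ) (p : ℝ × ℝ) : ℂ :=
  cexp (-a * (p.1 ^ 2 + p.2 ^ 2) + c₁ * p.1 + c₂ * p.2 + I * t * p.1 * p.2)

section TwistedGaussian

variable {a : ℝ}

lemma twistedGaussian_eq_phase_mul (a t : ℝ) (c₁ c₂ : ℂ) (p : ℝ × ℝ) :
    twistedGaussian a t c₁ c₂ p =
      cexp ((t * p.1 * p.2 : ℝ) * I) *
        (cexp (-a * p.1 ^ 2 + c₁ * p.1) * cexp (-a * p.2 ^ 2 + c₂ * p.2)) := by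
  rw [twistedGaussian, ← Complex.exp_add, ← Complex.exp_add]
  push_cast
  ring_nf

lemma twistedGaussian_mk_eq_mul (a t : ℝ) (c₁ c₂ : ℂ) (x y : ℝ) :
    twistedGaussian a t c₁ c₂ (x, y) =
      cexp (-a * x ^ 2 + c₁ * x) * cexp (-a * y ^ 2 + (c₂ + I * t * x) * y) := by
  rw [twistedGaussian, ← Complex.exp_add]
  ring_nf

lemma integrable_twistedGaussian (ha : 0 < a) (t : ℝ) (c₁ c₂ : ℂ) :
    Integrable (twistedGaussian a t c₁ c₂) (volume.prod volume) := by
  have hb : (-(a : ℂ)).re < 0 := by simpa using ha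
  have h₁ := integrable_cexp_quadratic' hb c₁ 0
  have h₂ := integrable_cexp_quadratic' hb c₂ 0
  simp only [add_zero] at h₁ h₂
  rw [funext (twistedGaussian_eq_phase_mul a t c₁ c₂)]
  refine (h₁.mul_prod h₂).bdd_mul (c := 1) (by fun_prop) (.of_forall fun p => ?_)
  rw [norm_exp_ofReal_mul_I]

lemma integral_twistedGaussian_mk (ha : 0 < a) (t : ℝ) (c₁ c₂ : ℂ) (x : ℝ) :
    ∫ y : ℝ, twistedGaussian a t c₁ c₂ (x, y) =
      √(π / a) * cexp (-a * x ^ 2 + c₁ * x + (c₂ + I * t * x) ^ 2 / (4 * a)) := by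
  simp_rw [twistedGaussian_mk_eq_mul, integral_const_mul, integral_cexp_neg_mul_sq_add_mul ha,
    Complex.exp_add]
  ring

lemma sqrt_pi_div_mul_sqrt_pi_div (ha : 0 < a) (t : ℝ) :
    √(π / a) * √(π / ((4 * a ^ 2 + t ^ 2) / (4 * a))) = 2 * π / √(4 * a ^ 2 + t ^ 2) := by
  rw [← sqrt_mul (by positivity), show π / a * (π / ((4 * a ^ 2 + t ^ 2) / (4 * a))) =
    (2 * π) ^ 2 / (4 * a ^ 2 + t ^ 2) by field_simp; ring, sqrt_div' _ (by positivity),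
    sqrt_sq (by positivity)]

theorem integral_twistedGaussian (ha : 0 < a) (t : ℝ) (c₁ c₂ : ℂ) :
    ∫ p, twistedGaussian a t c₁ c₂ p =
      2 * π / √(4 * a ^ 2 + t ^ 2) *
        cexp ((a * (c₁ ^ 2 + c₂ ^ 2) + I * t * c₁ * c₂) / (4 * a ^ 2 + t ^ 2)) := by
  set b := (4 * a ^ 2 + t ^ 2) / (4 * a) with hb_def
  have hb : 0 < b := by positivity
  have ha' : (a : ℂ) ≠ 0 := by exact_mod_cast ha.ne'
  have hq : (4 * a ^ 2 + t ^ 2 : ℂ) ≠ 0 := by norm_cast; positivity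
  -- completing the square in `y` leaves a Gaussian in `x` with the real coefficient `b`
  have hx (x : ℝ) : cexp (-a * x ^ 2 + c₁ * x + (c₂ + I * t * x) ^ 2 / (4 * a)) =
      cexp (c₂ ^ 2 / (4 * a)) * cexp (-b * x ^ 2 + (c₁ + I * t * c₂ / (2 * a)) * x) := by
    rw [← Complex.exp_add, hb_def]
    congr 1
    push_cast
    field_simp
    linear_combination (2 * t ^ 2 * x ^ 2 : ℂ) * I_sq
  have hs : (√(π / a) : ℂ) * √(π / b) = 2 * π / √(4 * a ^ 2 + t ^ 2) := by
    exact_mod_cast sqrt_pi_div_mul_sqrt_pi_div ha t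
  have he : c₂ ^ 2 / (4 * a) + (c₁ + I * t * c₂ / (2 * a)) ^ 2 / (4 * b) =
      (a * (c₁ ^ 2 + c₂ ^ 2) + I * t * c₁ * c₂) / (4 * a ^ 2 + t ^ 2) := by
    rw [hb_def]
    push_cast
    field_simp
    linear_combination (4 * t ^ 2 * c₂ ^ 2 : ℂ) * I_sq
  rw [Measure.volume_eq_prod, integral_prod _ (integrable_twistedGaussian ha t c₁ c₂)]
  simp_rw [integral_twistedGaussian_mk ha, hx, integral_const_mul,
    integral_cexp_neg_mul_sq_add_mul hb]
  rw [← hs, ← he, Complex.exp_add]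
  ring

end TwistedGaussian

theorem double_gaussian_integral (α : ℝ) (hα : 0 < α) (A B : ℂ) :
    ∫ p : ℝ × ℝ, Complex.exp (2 * Real.pi * Complex.I * (A * p.1 + B * p.2)) *
        Complex.exp (-Real.pi * α * (p.1 ^ 2 + p.2 ^ 2)) *
        Complex.exp (-2 * Real.pi * Complex.I * p.1 * p.2)
      = (1 / Real.sqrt (α ^ 2 + 1)) *
        Complex.exp (-(Real.pi / (α ^ 2 + 1)) * (α * A ^ 2 + α * B ^ 2 - 2 * Complex.I * A * B)) := by
  have hintegrand (p : ℝ × ℝ) :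
      cexp (2 * π * I * (A * p.1 + B * p.2)) * cexp (-π * α * (p.1 ^ 2 + p.2 ^ 2)) *
          cexp (-2 * π * I * p.1 * p.2) =
        twistedGaussian (π * α) (-2 * π) (2 * π * I * A) (2 * π * I * B) p := by
    rw [twistedGaussian, ← Complex.exp_add, ← Complex.exp_add]
    push_cast
    ring_nf
  have hnorm : 2 * π / √(4 * (π * α) ^ 2 + (-2 * π) ^ 2) = 1 / √(α ^ 2 + 1) := by
    rw [show 4 * (π * α) ^ 2 + (-2 * π) ^ 2 = (2 * π) ^ 2 * (α ^ 2 + 1) by ring,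
      sqrt_mul (by positivity), sqrt_sq (by positivity)]
    field_simp
  simp_rw [hintegrand, integral_twistedGaussian (by positivity : 0 < π * α)]
  congr 1
  · exact_mod_cast hnorm
  have hα1 : (α ^ 2 + 1 : ℂ) ≠ 0 := by norm_cast; positivity
  congr 1
  push_cast
  rw [show 4 * ((π : ℂ) * α) ^ 2 + (-2 * π) ^ 2 = 4 * π ^ 2 * (α ^ 2 + 1) by ring]
  field_simp
  linear_combination (4 * α * (A ^ 2 + B ^ 2) - 8 * I * A * B) * I_sq
end

section
/- For every real x > 0 and every real t, one has 0 < ϑ₃(π/2, ix) ≤ ϑ₃(t, ix) ≤ ϑ₃(0, ix), where ϑ₃(z, ix) = Σ_{n∈ℤ} e^{-πxn²} e^{2inz}. -/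
/-!
For `x ≥ 1/2` put `q = e^{-πx} ≤ 1/4` and `t = π/2 + ε`. Then
`ϑ₃(t) - ϑ₃(π/2) = 4 Σ_{m ≥ 1} (-1)^{m+1} q^{m²} sin²(mε)`, and since `sin²(mε) ≤ m² sin²ε`
the first term `q sin²ε` dominates all the others together.

For `x ≤ 1/2` the Jacobi transformation `ϑ₃(t, ix) = x^{-1/2} Σ_n exp(-(π/x)(n - t/π)²)` (Poisson
summation) turns `ϑ₃` into a periodized Gaussian of width `c = π/x > 6`. Pairing the Gaussians
centred at `±(k + 1/2)` shows that it is smallest at the half period: for `d ≥ 1/2`, `|w| ≤ 1/2`,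
`2 e^{-cd²} ≤ e^{-c(d+w)²} + e^{-c(d-w)²}`, i.e. `e^{cw²} ≤ cosh(2cdw)`.

The transformed side also gives positivity, and the upper bound is `cos ≤ 1`.
-/

/-- Real-valued theta function ϑ₃(z, ix) = Σ_{n∈ℤ} e^{-πxn²} cos(2nz). -/
noncomputable def theta3R (z x : ℝ) : ℝ :=
  ∑' n : ℤ, Real.exp (-Real.pi * x * (n : ℝ) ^ 2) * Real.cos (2 * (n : ℝ) * z)

open Real

noncomputable def periodizedGaussian (c s : ℝ) : ℝ := ∑' n : ℤ, exp (-c * (n - s) ^ 2)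

section PeriodizedGaussian

variable {c : ℝ}

lemma summable_exp_neg_mul_int_sub_sq (hc : 0 < c) (s : ℝ) :
    Summable fun n : ℤ ↦ exp (-c * (n - s) ^ 2) := by
  have h := ((summable_jacobiTheta₂_term_iff (Complex.I * (-c * s / π : ℝ))
    (Complex.I * (c / π : ℝ))).mpr (by rw [Complex.I_mul_im, Complex.ofReal_re]; positivity)).norm
  refine (h.mul_left (exp (-c * s ^ 2))).congr fun n ↦ ?_
  rw [norm_jacobiTheta₂_term, ← exp_add, Complex.I_mul_im, Complex.I_mul_im, Complex.ofReal_re,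
    Complex.ofReal_re]
  congr 1
  field_simp
  ring

lemma periodizedGaussian_pos (hc : 0 < c) (s : ℝ) : 0 < periodizedGaussian c s :=
  (summable_exp_neg_mul_int_sub_sq hc s).tsum_pos (fun _ ↦ (exp_pos _).le) 0 (exp_pos _)

lemma periodizedGaussian_add_intCast (c s : ℝ) (m : ℤ) :
    periodizedGaussian c (s + m) = periodizedGaussian c s := by
  rw [periodizedGaussian, periodizedGaussian, ← (Equiv.addRight m).tsum_eq]
  exact tsum_congr fun n ↦ by simp only [Equiv.coe_addRight]; push_cast; ring_nf

lemma periodizedGaussian_neg (c s : ℝ) : periodizedGaussian c (-s) = periodizedGaussian c s := by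
  rw [periodizedGaussian, periodizedGaussian, ← (Equiv.neg ℤ).tsum_eq]
  exact tsum_congr fun n ↦ by simp only [Equiv.neg_apply]; push_cast; ring_nf

lemma exp_mul_sq_le_cosh (hc : 6 ≤ c) {u : ℝ} (hu : |u| ≤ 1 / 2) :
    exp (c * u ^ 2) ≤ cosh (c * u) := by
  wlog hu0 : 0 ≤ u generalizing u
  · simpa [mul_neg, cosh_neg] using this (u := -u) (by rwa [abs_neg]) (by linarith)
  rw [abs_of_nonneg hu0] at hu
  have hcosh : 1 + (c * u) ^ 2 / 2 ≤ cosh (c * u) := by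
    simpa [Finset.sum_range_succ] using
      sum_le_hasSum (Finset.range 2) (fun n _ ↦ by positivity) (hasSum_cosh (c * u))
  rcases le_or_gt (c * u ^ 2) (1 / 2) with hsmall | hlarge
  · have h1 := exp_bound_div_one_sub_of_interval (by positivity : 0 ≤ c * u ^ 2) (by linarith)
    have h2 : 1 / (1 - c * u ^ 2) ≤ 1 + 2 * (c * u ^ 2) := by
      rw [div_le_iff₀ (by linarith)]
      nlinarith [sq_nonneg (c * u ^ 2)]
    nlinarith [sq_nonneg u]
  · have hcu : 3 / 2 ≤ c * u := by nlinarith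
    have : c * u ^ 2 ≤ c * u - log 2 := by
      nlinarith [log_two_lt_d9, mul_nonneg (by linarith : 0 ≤ c * u) (by linarith : 0 ≤ 1 / 2 - u)]
    calc exp (c * u ^ 2) ≤ exp (c * u - log 2) := exp_le_exp.mpr this
      _ = exp (c * u) / 2 := by rw [exp_sub, exp_log two_pos]
      _ ≤ cosh (c * u) := by rw [cosh_eq]; linarith [exp_pos (-(c * u))]

lemma two_mul_exp_neg_mul_sq_le (hc : 6 ≤ c) {d w : ℝ} (hd : 1 / 2 ≤ d) (hw : |w| ≤ 1 / 2) :
    2 * exp (-c * d ^ 2) ≤ exp (-c * (d + w) ^ 2) + exp (-c * (d - w) ^ 2) := by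
  have hcosh : cosh (c * w) ≤ cosh (2 * c * d * w) := by
    rw [cosh_le_cosh, abs_mul, abs_mul, abs_mul, abs_mul, abs_two]
    have : |c| ≤ 2 * |c| * |d| := by
      rw [abs_of_nonneg (by linarith : 0 ≤ c), abs_of_nonneg (by linarith : 0 ≤ d)]; nlinarith
    exact mul_le_mul_of_nonneg_right this (abs_nonneg w)
  calc 2 * exp (-c * d ^ 2) = exp (-c * (d ^ 2 + w ^ 2)) * (2 * exp (c * w ^ 2)) := by
        rw [mul_left_comm, ← exp_add]; ring_nf
    _ ≤ exp (-c * (d ^ 2 + w ^ 2)) * (2 * cosh (2 * c * d * w)) := by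
        gcongr; exact (exp_mul_sq_le_cosh hc hw).trans hcosh
    _ = exp (-c * (d + w) ^ 2) + exp (-c * (d - w) ^ 2) := by
        rw [cosh_eq, mul_div_cancel₀ _ two_ne_zero, mul_add, ← exp_add, ← exp_add]
        ring_nf

lemma periodizedGaussian_half_le (hc : 6 ≤ c) (s : ℝ) :
    periodizedGaussian c (1 / 2) ≤ periodizedGaussian c s := by
  suffices key : ∀ w, |w| ≤ 1 / 2 →
      periodizedGaussian c (-(1 / 2)) ≤ periodizedGaussian c (-(1 / 2) - w) by
    rw [← periodizedGaussian_neg, ← periodizedGaussian_add_intCast c s (-⌈s⌉)]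
    convert key (-(1 / 2) - (s - ⌈s⌉)) ?_ using 2
    · push_cast; ring
    · rw [abs_le]; constructor <;> linarith [Int.le_ceil s, Int.ceil_lt_add_one s]
  intro w hw
  -- pair the Gaussians centred at `k + 1/2` and `-(k + 1/2)`
  have hsum (u : ℝ) :=
    (summable_exp_neg_mul_int_sub_sq (c := c) (by linarith) u).hasSum.nat_add_neg_add_one
  rw [periodizedGaussian, periodizedGaussian, ← (hsum _).tsum_eq, ← (hsum _).tsum_eq]
  refine (hsum _).summable.tsum_le_tsum (fun k ↦ ?_) (hsum _).summable
  calc _ = 2 * exp (-c * (k + 1 / 2) ^ 2) := by push_cast; ring_nf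
    _ ≤ exp (-c * (k + 1 / 2 + w) ^ 2) + exp (-c * (k + 1 / 2 - w) ^ 2) :=
      two_mul_exp_neg_mul_sq_le hc (le_add_of_nonneg_left k.cast_nonneg) hw
    _ = _ := by push_cast; ring_nf

end PeriodizedGaussian

lemma abs_sin_nat_mul_le (n : ℕ) (x : ℝ) : |sin (n * x)| ≤ n * |sin x| := by
  induction n with
  | zero => simp
  | succ n ih =>
    rw [Nat.cast_succ, add_mul, one_mul, sin_add]
    calc |sin (n * x) * cos x + cos (n * x) * sin x|
        ≤ |sin (n * x)| * |cos x| + |cos (n * x)| * |sin x| := by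
          rw [← abs_mul, ← abs_mul]; exact abs_add_le _ _
      _ ≤ |sin (n * x)| * 1 + 1 * |sin x| := by gcongr <;> exact abs_cos_le_one _
      _ ≤ (n + 1) * |sin x| := by linarith

lemma sin_nat_mul_sq_le (n : ℕ) (x : ℝ) : sin (n * x) ^ 2 ≤ n ^ 2 * sin x ^ 2 := by
  simpa only [sq_abs, mul_pow] using pow_le_pow_left₀ (abs_nonneg _) (abs_sin_nat_mul_le n x) 2

lemma cos_two_mul_nat_mul_sub_cos (n : ℕ) (t : ℝ) :
    cos (2 * n * t) - cos (2 * n * (π / 2)) = -2 * (-1) ^ n * sin (n * (t - π / 2)) ^ 2 := by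
  rw [show 2 * n * t = 2 * (n * (t - π / 2)) + n * π by ring, show 2 * n * (π / 2) = n * π by ring,
    cos_add_nat_mul_pi, cos_nat_mul_pi, cos_two_mul_eq_one_sub]
  ring

section QSeries

variable {q : ℝ}

lemma nat_add_two_sq_mul_pow_sq_le (hq0 : 0 ≤ q) (hq1 : q ≤ 1) (k : ℕ) :
    ((k + 2 : ℕ) : ℝ) ^ 2 * q ^ (k + 2) ^ 2 ≤ 16 * q ^ 4 * (4 * q ^ 2) ^ k := by
  have hsq : ((k + 2 : ℕ) : ℝ) ^ 2 ≤ 4 ^ (k + 2) := by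
    calc ((k + 2 : ℕ) : ℝ) ^ 2 ≤ ((2 : ℝ) ^ (k + 2)) ^ 2 := by
          gcongr; exact_mod_cast (Nat.lt_two_pow_self).le
      _ = 4 ^ (k + 2) := by rw [← pow_mul, mul_comm, pow_mul]; norm_num
  have hpow : q ^ (k + 2) ^ 2 ≤ q ^ (2 * (k + 2)) := pow_le_pow_of_le_one hq0 hq1 (by nlinarith)
  calc ((k + 2 : ℕ) : ℝ) ^ 2 * q ^ (k + 2) ^ 2 ≤ 4 ^ (k + 2) * q ^ (2 * (k + 2)) := by gcongr
    _ = 16 * q ^ 4 * (4 * q ^ 2) ^ k := by ring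

lemma summable_pow_sq_mul_cos (hq0 : 0 ≤ q) (hq1 : q < 1) (t : ℝ) :
    Summable fun m : ℕ ↦ q ^ (m + 1) ^ 2 * cos (2 * (m + 1) * t) := by
  refine (summable_geometric_of_lt_one hq0 hq1).of_norm_bounded fun m ↦ ?_
  rw [norm_mul, norm_pow, Real.norm_of_nonneg hq0]
  calc q ^ (m + 1) ^ 2 * ‖cos (2 * (m + 1) * t)‖ ≤ q ^ (m + 1) ^ 2 * 1 := by
        gcongr; exact abs_cos_le_one _
    _ ≤ q ^ m := by
        rw [mul_one]; exact pow_le_pow_of_le_one hq0 hq1.le (by nlinarith)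

lemma tsum_neg_one_pow_mul_pow_sq_mul_sin_sq_nonneg (hq0 : 0 ≤ q) (hq : q ≤ 1 / 4) (ε : ℝ) :
    0 ≤ ∑' m : ℕ, (-1) ^ m * q ^ (m + 1) ^ 2 * sin ((m + 1 : ℕ) * ε) ^ 2 := by
  set a : ℕ → ℝ := fun m ↦ (-1) ^ m * q ^ (m + 1) ^ 2 * sin ((m + 1 : ℕ) * ε) ^ 2
  have h4q : 4 * q ^ 2 < 1 := by nlinarith
  have hgeom := (hasSum_geometric_of_lt_one (by positivity) h4q).mul_left
    (16 * q ^ 4 * sin ε ^ 2)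
  have htail (k : ℕ) : ‖a (k + 1)‖ ≤ 16 * q ^ 4 * sin ε ^ 2 * (4 * q ^ 2) ^ k := by
    simp only [a, norm_mul, norm_pow, norm_neg, norm_one, one_pow, one_mul, Real.norm_of_nonneg hq0,
      Real.norm_of_nonneg (sq_nonneg _)]
    calc q ^ (k + 1 + 1) ^ 2 * sin ((k + 1 + 1 : ℕ) * ε) ^ 2
        ≤ q ^ (k + 2) ^ 2 * (((k + 2 : ℕ) : ℝ) ^ 2 * sin ε ^ 2) := by
          gcongr; exact sin_nat_mul_sq_le _ _
      _ = ((k + 2 : ℕ) : ℝ) ^ 2 * q ^ (k + 2) ^ 2 * sin ε ^ 2 := by ring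
      _ ≤ 16 * q ^ 4 * (4 * q ^ 2) ^ k * sin ε ^ 2 :=
          mul_le_mul_of_nonneg_right (nat_add_two_sq_mul_pow_sq_le hq0 (by linarith) k)
            (sq_nonneg _)
      _ = 16 * q ^ 4 * sin ε ^ 2 * (4 * q ^ 2) ^ k := by ring
  have hsum : Summable a :=
    (summable_nat_add_iff 1).mp (hgeom.summable.of_norm_bounded htail)
  have hbound := (abs_le.mp (tsum_of_norm_bounded hgeom htail)).1
  have hinv : (1 - 4 * q ^ 2)⁻¹ ≤ 4 / 3 := by
    rw [inv_le_comm₀ (by linarith) (by norm_num)]; nlinarith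
  have hq3 : 64 / 3 * q ^ 3 ≤ 1 := by nlinarith
  rw [hsum.tsum_eq_zero_add]
  have ha0 : a 0 = q * sin ε ^ 2 := by simp [a]
  nlinarith [mul_le_mul_of_nonneg_left hinv (by positivity : 0 ≤ 16 * q ^ 4 * sin ε ^ 2),
    mul_nonneg (mul_nonneg hq0 (sq_nonneg (sin ε))) (sub_nonneg.mpr hq3)]

lemma tsum_pow_sq_mul_cos_pi_div_two_le (hq0 : 0 ≤ q) (hq : q ≤ 1 / 4) (t : ℝ) :
    ∑' m : ℕ, q ^ (m + 1) ^ 2 * cos (2 * (m + 1) * (π / 2)) ≤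
      ∑' m : ℕ, q ^ (m + 1) ^ 2 * cos (2 * (m + 1) * t) := by
  rw [← sub_nonneg, ← (summable_pow_sq_mul_cos hq0 (by linarith) t).tsum_sub
    (summable_pow_sq_mul_cos hq0 (by linarith) _)]
  refine (mul_nonneg zero_le_two
    (tsum_neg_one_pow_mul_pow_sq_mul_sin_sq_nonneg hq0 hq (t - π / 2))).trans_eq ?_
  rw [← tsum_mul_left]
  refine tsum_congr fun m ↦ ?_
  have h := cos_two_mul_nat_mul_sub_cos (m + 1) t
  push_cast at h ⊢
  rw [← mul_sub, h]
  ring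

end QSeries

lemma one_div_ofReal_cpow_half {x : ℝ} (hx : 0 ≤ x) :
    1 / (x : ℂ) ^ (1 / 2 : ℂ) = ((√x)⁻¹ : ℝ) := by
  rw [show (1 / 2 : ℂ) = ((1 / 2 : ℝ) : ℂ) by norm_num, ← Complex.ofReal_cpow hx, ← sqrt_eq_rpow,
    one_div, Complex.ofReal_inv]

lemma hasSum_theta3R_term {x : ℝ} (hx : 0 < x) (t : ℝ) :
    HasSum (fun n : ℤ ↦ exp (-π * x * n ^ 2) * cos (2 * n * t))
      ((√x)⁻¹ * periodizedGaussian (π / x) (t / π)) := by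
  set b : ℂ := Complex.I * t / π
  have hterm (n : ℤ) : -π * x * (n : ℂ) ^ 2 + 2 * π * b * n =
      ((-π * x * n ^ 2 : ℝ) : ℂ) + ((2 * n * t : ℝ) : ℂ) * Complex.I := by
    simp only [b]
    push_cast
    field_simp
  have hsum : Summable fun n : ℤ ↦ Complex.exp (-π * x * (n : ℂ) ^ 2 + 2 * π * b * n) := by
    refine .of_norm ((summable_exp_neg_mul_int_sub_sq (by positivity : 0 < π * x) 0).congr
      fun n ↦ ?_)
    rw [hterm, Complex.norm_exp, Complex.add_re, Complex.ofReal_re, Complex.re_ofReal_mul,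
      Complex.I_re, mul_zero, add_zero]
    congr 1
    ring
  have hre := Complex.hasSum_re hsum.hasSum
  rw [Complex.tsum_exp_neg_quadratic (by simpa using hx)] at hre
  convert hre using 1
  · funext n
    rw [hterm, Complex.exp_add, ← Complex.ofReal_exp, Complex.re_ofReal_mul,
      Complex.exp_ofReal_mul_I_re]
  · have hgauss : ∑' n : ℤ, Complex.exp (-π / x * (n + Complex.I * b) ^ 2) =
        (periodizedGaussian (π / x) (t / π) : ℂ) := by
      rw [periodizedGaussian, Complex.ofReal_tsum]
      refine tsum_congr fun n ↦ ?_
      rw [Complex.ofReal_exp]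
      congr 1
      have hIb : Complex.I * b = -(t / π : ℝ) := by
        simp only [b, ← mul_div_assoc, ← mul_assoc, Complex.I_mul_I]
        push_cast
        ring
      rw [hIb]
      push_cast
      ring
    rw [one_div_ofReal_cpow_half hx.le, hgauss, ← Complex.ofReal_mul, Complex.ofReal_re]

lemma theta3R_eq_periodizedGaussian {x : ℝ} (hx : 0 < x) (t : ℝ) :
    theta3R t x = (√x)⁻¹ * periodizedGaussian (π / x) (t / π) :=
  (hasSum_theta3R_term hx t).tsum_eq

lemma theta3R_le_theta3R_zero {x : ℝ} (hx : 0 < x) (t : ℝ) : theta3R t x ≤ theta3R 0 x := by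
  refine (hasSum_theta3R_term hx t).summable.tsum_le_tsum (fun n ↦ ?_)
    (hasSum_theta3R_term hx 0).summable
  rw [mul_zero, cos_zero]
  exact mul_le_mul_of_nonneg_left (cos_le_one _) (exp_pos _).le

lemma theta3R_eq_one_add_two_mul_tsum {x : ℝ} (hx : 0 < x) (t : ℝ) :
    theta3R t x = 1 + 2 * ∑' m : ℕ, exp (-π * x) ^ (m + 1) ^ 2 * cos (2 * (m + 1) * t) := by
  rw [theta3R, tsum_int_eq_zero_add_two_mul_tsum_pnat (fun n ↦ ?even)
    (hasSum_theta3R_term hx t).summable, tsum_pnat_eq_tsum_succ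
    (f := fun n : ℕ ↦ exp (-π * x * ((n : ℤ) : ℝ) ^ 2) * cos (2 * ((n : ℤ) : ℝ) * t))]
  · simp only [Int.cast_zero, zero_pow two_ne_zero, mul_zero, zero_mul, exp_zero, cos_zero, one_mul,
      two_nsmul, ← two_mul]
    refine congrArg (1 + 2 * ·) (tsum_congr fun m ↦ ?_)
    rw [← exp_nat_mul]
    push_cast
    ring_nf
  · simp only [Int.cast_neg, neg_sq, mul_neg, neg_mul, cos_neg]

lemma theta3R_pi_div_two_le_of_half_le {x : ℝ} (hx : 1 / 2 ≤ x) (t : ℝ) :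
    theta3R (π / 2) x ≤ theta3R t x := by
  have hx0 : 0 < x := by linarith
  have hq : exp (-π * x) ≤ 1 / 4 := by
    calc exp (-π * x) ≤ exp (-(2 * log 2)) := by
          gcongr; nlinarith [log_two_lt_d9, pi_gt_three]
      _ = 1 / 4 := by rw [exp_neg, two_mul, exp_add, exp_log two_pos]; norm_num
  rw [theta3R_eq_one_add_two_mul_tsum hx0, theta3R_eq_one_add_two_mul_tsum hx0]
  linarith [tsum_pow_sq_mul_cos_pi_div_two_le (exp_pos _).le hq t]

lemma theta3R_pi_div_two_le_of_le_half {x : ℝ} (hx0 : 0 < x) (hx : x ≤ 1 / 2) (t : ℝ) :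
    theta3R (π / 2) x ≤ theta3R t x := by
  rw [theta3R_eq_periodizedGaussian hx0, theta3R_eq_periodizedGaussian hx0,
    div_div_cancel_left' pi_ne_zero]
  gcongr
  rw [← one_div]
  refine periodizedGaussian_half_le ?_ _
  rw [le_div_iff₀ hx0]
  nlinarith [pi_gt_three]

theorem theta3R_bounds (x : ℝ) (hx : 0 < x) (t : ℝ) :
    0 < theta3R (Real.pi / 2) x ∧ theta3R (Real.pi / 2) x ≤ theta3R t x ∧
      theta3R t x ≤ theta3R 0 x := by
  refine ⟨?_, ?_, theta3R_le_theta3R_zero hx t⟩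
  · rw [theta3R_eq_periodizedGaussian hx]
    exact mul_pos (by positivity) (periodizedGaussian_pos (by positivity) _)
  · rcases le_total x (1 / 2) with hx' | hx'
    · exact theta3R_pi_div_two_le_of_le_half hx hx' t
    · exact theta3R_pi_div_two_le_of_half_le hx' t
end

section
/- The function x ↦ ϑ₃(π/2, ix) = 1 + 2Σ_{n≥1} (−1)ⁿ e^{-πxn²} is increasing on the interval (0.2, ∞). -/
/-!
Writing `e(n) = e^{-πxn²}`, the substitution `z = π/2` turns `cos(2nz)` into `(-1)ⁿ`, and
grouping the alternating series in consecutive pairs gives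
`ϑ₃(π/2, ix) = 1 - 2 Σ_{k≥0} (e(2k+1) - e(2k+2))`. Each bracket `e^{-αx} - e^{-βx}`
(`α = πm²`, `β = π(m+1)²`, `m` odd) has derivative `e^{-αx}(β e^{-(β-α)x} - α)`, which is
negative for `x > 0.2` because `(m+1)² ≤ 4m²` and `e^{-(β-α)/5} ≤ e^{-3π/5} < 1/4`. So every
bracket strictly decreases, and `ϑ₃(π/2, i·)` strictly increases.
-/

open Real Set

noncomputable def thetaPair (x : ℝ) (k : ℕ) : ℝ :=
  exp (-π * x * (2 * k + 1) ^ 2) - exp (-π * x * (2 * k + 2) ^ 2)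

lemma summable_exp_neg_pi_mul_of_ge {x : ℝ} (hx : 0 < x) {f : ℕ → ℝ}
    (hf : ∀ n : ℕ, (n : ℝ) ≤ f n) :
    Summable fun n => exp (-π * x * f n) :=
  summable_exp_nat_mul_of_ge (by nlinarith [pi_pos]) hf

lemma hasSum_thetaPair {x : ℝ} (hx : 0 < x) :
    HasSum (thetaPair x)
      ((∑' k : ℕ, exp (-π * x * (2 * k + 1) ^ 2)) - ∑' k : ℕ, exp (-π * x * (2 * k + 2) ^ 2)) :=
  (summable_exp_neg_pi_mul_of_ge hx fun k => by nlinarith).hasSum.sub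
    (summable_exp_neg_pi_mul_of_ge hx fun k => by nlinarith).hasSum

lemma hasSum_neg_one_pow_mul_exp_neg_pi_mul_sq {x : ℝ} (hx : 0 < x) :
    HasSum (fun n : ℕ => (-1) ^ (n + 1) * exp (-π * x * ((n : ℝ) + 1) ^ 2))
      (-∑' k, thetaPair x k) := by
  rw [(hasSum_thetaPair hx).tsum_eq, neg_sub, sub_eq_neg_add]
  refine HasSum.even_add_odd ?_ ?_
  · refine (summable_exp_neg_pi_mul_of_ge hx fun k => by nlinarith).hasSum.neg.congr_fun
      fun k => ?_
    rw [Odd.neg_one_pow ⟨k, rfl⟩, neg_one_mul]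
    push_cast
    rfl
  · refine (summable_exp_neg_pi_mul_of_ge hx fun k => by nlinarith).hasSum.congr_fun fun k => ?_
    rw [Even.neg_one_pow ⟨k + 1, by ring⟩, one_mul]
    push_cast
    ring_nf

lemma theta3R_half_pi_eq_tsum_thetaPair {x : ℝ} (hx : 0 < x) :
    theta3R (π / 2) x = 1 - 2 * ∑' k, thetaPair x k := by
  have hpos : ∀ n : ℕ,
      exp (-π * x * ((n + 1 : ℤ) : ℝ) ^ 2) * cos (2 * ((n + 1 : ℤ) : ℝ) * (π / 2)) =
        (-1) ^ (n + 1) * exp (-π * x * ((n : ℝ) + 1) ^ 2) := by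
    intro n
    rw [show 2 * ((n + 1 : ℤ) : ℝ) * (π / 2) = ((n + 1 : ℕ) : ℝ) * π by push_cast; ring,
      cos_nat_mul_pi]
    push_cast
    ring
  have hneg : ∀ n : ℕ,
      exp (-π * x * ((-(n + 1) : ℤ) : ℝ) ^ 2) * cos (2 * ((-(n + 1) : ℤ) : ℝ) * (π / 2)) =
        (-1) ^ (n + 1) * exp (-π * x * ((n : ℝ) + 1) ^ 2) := by
    intro n
    rw [show 2 * ((-(n + 1) : ℤ) : ℝ) * (π / 2) = -(((n + 1 : ℕ) : ℝ) * π) by push_cast; ring,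
      cos_neg, cos_nat_mul_pi]
    push_cast
    rw [neg_sq, mul_comm]
  have hsum := HasSum.of_add_one_of_neg_add_one
    (f := fun n : ℤ => exp (-π * x * (n : ℝ) ^ 2) * cos (2 * (n : ℝ) * (π / 2)))
    ((hasSum_neg_one_pow_mul_exp_neg_pi_mul_sq hx).congr_fun hpos)
    ((hasSum_neg_one_pow_mul_exp_neg_pi_mul_sq hx).congr_fun hneg)
  rw [theta3R, hsum.tsum_eq]
  simp only [neg_mul, Int.cast_zero, ne_eq, OfNat.ofNat_ne_zero, not_false_eq_true, zero_pow,
    mul_zero, exp_zero, zero_mul, cos_zero, mul_one]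
  ring

lemma strictAntiOn_exp_neg_mul_sub_exp_neg_mul {α β x₀ : ℝ} (hβ : 0 ≤ β) (hαβ : α ≤ β)
    (h : β * exp (-(β - α) * x₀) < α) :
    StrictAntiOn (fun x => exp (-α * x) - exp (-β * x)) (Ici x₀) := by
  refine strictAntiOn_of_deriv_neg (convex_Ici x₀) (by fun_prop) fun x hx => ?_
  rw [interior_Ici] at hx
  have hderiv : HasDerivAt (fun x => exp (-α * x) - exp (-β * x))
      (exp (-α * x) * (β * exp (-(β - α) * x) - α)) x := by
    refine (((hasDerivAt_id' x).const_mul (-α)).exp.sub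
      ((hasDerivAt_id' x).const_mul (-β)).exp).congr_deriv ?_
    rw [show -β * x = -α * x + -(β - α) * x by ring, exp_add]
    ring
  have hdecay : exp (-(β - α) * x) ≤ exp (-(β - α) * x₀) :=
    exp_le_exp.2 (by nlinarith [hx.out])
  rw [hderiv.deriv]
  exact mul_neg_of_pos_of_neg (exp_pos _) (by nlinarith)

lemma strictAntiOn_thetaPair (k : ℕ) : StrictAntiOn (fun x => thetaPair x k) (Ici 0.2) := by
  set m : ℝ := 2 * k + 1
  have hm : 1 ≤ m := by simp [m]
  have hfun : (fun x => thetaPair x k) =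
      fun x => exp (-(π * m ^ 2) * x) - exp (-(π * (m + 1) ^ 2) * x) := by
    funext x
    simp only [thetaPair, m]
    ring_nf
  have hsmall : exp (-(π * (2 * m + 1)) * 0.2) < 1 / 4 := by
    have h18 : 1.8 ≤ π * (2 * m + 1) * 0.2 := by nlinarith [pi_gt_three]
    have h4 := (quadratic_le_exp_of_nonneg (x := 1.8) (by norm_num)).trans (exp_le_exp.2 h18)
    rw [neg_mul, exp_neg, inv_lt_comm₀ (exp_pos _) (by norm_num)]
    norm_num at h4 ⊢
    linarith
  rw [hfun]
  refine strictAntiOn_exp_neg_mul_sub_exp_neg_mul (by positivity) (by gcongr; linarith) ?_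
  rw [show π * (m + 1) ^ 2 - π * m ^ 2 = π * (2 * m + 1) by ring]
  have hsq : (m + 1) ^ 2 ≤ 4 * m ^ 2 := by nlinarith
  nlinarith [mul_lt_mul_of_pos_left hsmall (by positivity : 0 < π * (m + 1) ^ 2), pi_pos]

theorem theta3R_half_pi_strictMonoOn :
    StrictMonoOn (fun x : ℝ => theta3R (Real.pi / 2) x) (Set.Ioi (0.2 : ℝ)) := by
  intro a ha b hb hab
  have ha0 : 0 < a := lt_trans (by norm_num) ha
  have hb0 : 0 < b := lt_trans (by norm_num) hb
  have hpair : ∀ k, thetaPair b k < thetaPair a k := fun k =>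
    strictAntiOn_thetaPair k (Ioi_subset_Ici_self ha) (Ioi_subset_Ici_self hb) hab
  have := (hasSum_thetaPair hb0).summable.tsum_lt_tsum (fun k => (hpair k).le) (hpair 0)
    (hasSum_thetaPair ha0).summable
  show theta3R (π / 2) a < theta3R (π / 2) b
  rw [theta3R_half_pi_eq_tsum_thetaPair ha0, theta3R_half_pi_eq_tsum_thetaPair hb0]
  linarith
end

section
/- Let f₁(x) = e^{-πα₁x²} Σ_p a_p e((r₁p − γ₁)x) and f₂(x) = e^{-πα₂x²} Σ_q b_q e((r₂q − γ₂)x), where α₁, α₂ > 0, r₁, r₂, γ₁, γ₂ are real, (a_p), (b_q) are rapidly decreasing complex sequences indexed by ℤ, and α = α₁ + α₂. Then for all real s, t: ∫_ℝ conj(f₁(x)) f₂(x+s) e(tx) dx = (1/√α) e(−α₂st/α) e^{-πα₁α₂s²/α} e^{-πt²/α} e^{-π(γ₁−γ₂)²/α} e^{2π(γ₂−γ₁)t/α} e(−(α₂γ₁+α₁γ₂)s/α) · Θ(s,t), where Θ(s,t) = Σ_{p,q} conj(a_p) b_q e((α₁r₂q + α₂r₁p)s/α) exp((2π/α)(γ₂−γ₁)(r₂q−r₁p))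 exp(−(π/α)[(r₂q−r₁p)² + 2t(r₂q−r₁p)]). -/
/-!
Expanding both series, `conj (f₁ x) * f₂ (x + s) * e(t x)` is the absolutely convergent double
series `∑ conj (a p) * b q * exp (-π α x² + c_pq x + d_pq)`. The real parts of `c_pq` and `d_pq`
do not depend on `(p, q)`, so `∑ |a p| |b q|` times a single Gaussian dominates the series and
it may be integrated term by term; each term is a Gaussian integral, evaluated by completing
the square.
-/

open MeasureTheory Complex Real ComplexConjugate

lemma summable_norm_of_abs_pow_mul_norm_le {E : Type*} [SeminormedAddCommGroup E] {a : ℤ → E}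
    {k : ℕ} (hk : 1 < k) {C : ℝ} (h : ∀ p : ℤ, (|p| : ℝ) ^ k * ‖a p‖ ≤ C) :
    Summable fun p => ‖a p‖ := by
  refine .of_norm_bounded_eventually ((summable_one_div_int_pow.mpr hk).abs.mul_left C) ?_
  filter_upwards [Filter.eventually_cofinite_ne 0] with p hp
  have hpos : (0 : ℝ) < |(p : ℝ)| ^ k := by positivity
  rw [norm_norm, abs_div, abs_one, abs_pow, mul_one_div, le_div_iff₀ hpos, mul_comm]
  exact_mod_cast h p

lemma conj_tsum_mul_tsum {ι ι' : Type*} {u : ι → ℂ} {v : ι' → ℂ}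
    (hu : Summable fun i => ‖u i‖) (hv : Summable fun j => ‖v j‖) :
    conj (∑' i, u i) * ∑' j, v j = ∑' ij : ι × ι', conj (u ij.1) * v ij.2 := by
  rw [conj_tsum]
  exact tsum_mul_tsum_of_summable_norm (by simpa using hu) hv

lemma conj_gaussian_mul_gaussian (α₁ α₂ θ₁ θ₂ s t x : ℝ) :
    conj (cexp (-π * α₁ * x ^ 2)) * conj (cexp (2 * π * I * (θ₁ * x))) *
      (cexp (-π * α₂ * (x + s) ^ 2) * cexp (2 * π * I * (θ₂ * (x + s)))) *
      cexp (2 * π * I * (t * x))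
    = cexp (-(π * (α₁ + α₂)) * x ^ 2 + (-2 * π * α₂ * s + 2 * π * I * (θ₂ - θ₁ + t)) * x +
        (-π * α₂ * s ^ 2 + 2 * π * I * (θ₂ * s))) := by
  simp only [← exp_conj, ← Complex.exp_add, map_mul, map_neg, map_pow, map_ofNat, conj_ofReal,
    conj_I]
  ring_nf

lemma conj_gaussian_series_mul_gaussian_series {a b : ℤ → ℂ} (ha : Summable fun p => ‖a p‖)
    (hb : Summable fun q => ‖b q‖) (α₁ α₂ r₁ r₂ γ₁ γ₂ s t x : ℝ) :
    conj (cexp (-π * α₁ * x ^ 2) * ∑' p : ℤ, a p * cexp (2 * π * I * ((r₁ * p - γ₁) * x))) *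
      (cexp (-π * α₂ * (x + s) ^ 2) *
        ∑' q : ℤ, b q * cexp (2 * π * I * ((r₂ * q - γ₂) * (x + s)))) *
      cexp (2 * π * I * (t * x))
    = ∑' pq : ℤ × ℤ, conj (a pq.1) * b pq.2 *
        cexp (-(π * (α₁ + α₂)) * x ^ 2 +
          (-2 * π * α₂ * s + 2 * π * I * (r₂ * pq.2 - γ₂ - (r₁ * pq.1 - γ₁) + t)) * x +
          (-π * α₂ * s ^ 2 + 2 * π * I * ((r₂ * pq.2 - γ₂) * s))) := by
  have hu : Summable fun p : ℤ => ‖a p * cexp (2 * π * I * ((r₁ * p - γ₁) * x))‖ := by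
    simpa [norm_exp] using ha
  have hv : Summable fun q : ℤ => ‖b q * cexp (2 * π * I * ((r₂ * q - γ₂) * (x + s)))‖ := by
    simpa [norm_exp] using hb
  rw [map_mul, mul_mul_mul_comm, mul_right_comm, conj_tsum_mul_tsum hu hv, ← tsum_mul_left]
  refine tsum_congr fun pq => ?_
  have h := conj_gaussian_mul_gaussian α₁ α₂ (r₁ * pq.1 - γ₁) (r₂ * pq.2 - γ₂) s t x
  push_cast at h ⊢
  rw [← h, map_mul]
  ring

lemma integral_tsum_mul_cexp_quadratic {ι : Type*} [Countable ι] {w : ι → ℂ}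
    (hw : Summable fun i => ‖w i‖) {b : ℂ} (hb : b.re < 0) {c d : ι → ℂ} {c₀ d₀ : ℝ}
    (hc : ∀ i, (c i).re = c₀) (hd : ∀ i, (d i).re = d₀) :
    ∫ x : ℝ, ∑' i, w i * cexp (b * x ^ 2 + c i * x + d i)
      = ∑' i, w i * ((π / -b) ^ (1 / 2 : ℂ) * cexp (d i - c i ^ 2 / (4 * b))) := by
  have hnorm (i) (x : ℝ) : ‖w i * cexp (b * x ^ 2 + c i * x + d i)‖
      = ‖w i‖ * ‖cexp (b * x ^ 2 + c₀ * x + d₀)‖ := by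
    simp [norm_exp, ← ofReal_pow, hc, hd]
  rw [← integral_tsum_of_summable_integral_norm]
  · simp_rw [integral_const_mul, integral_cexp_quadratic hb]
  · exact fun i => (integrable_cexp_quadratic' hb _ _).const_mul _
  · simp_rw [hnorm, integral_const_mul]
    exact hw.mul_right _

lemma cpow_one_half_pi_div_pi_mul {α : ℝ} (hα : 0 < α) :
    ((π : ℂ) / -(-(π * α))) ^ (1 / 2 : ℂ) = 1 / (√α : ℂ) := by
  rw [neg_neg, div_mul_cancel_left₀ (ofReal_ne_zero.mpr pi_ne_zero), ← ofReal_inv,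
    show (1 / 2 : ℂ) = ((1 / 2 : ℝ) : ℂ) by norm_num, ← ofReal_cpow (by positivity),
    ← sqrt_eq_rpow, sqrt_inv, ofReal_inv, one_div]

/-- Completing the square: the exponent `d - c ^ 2 / (4 * b)` of `integral_cexp_quadratic`,
split into the factors of `gaussian_theta_inner_product`. -/
lemma gaussian_exponent_eq (α α₁ α₂ r₁ r₂ γ₁ γ₂ s t p q : ℂ) (hα : α = α₁ + α₂) (hα0 : α ≠ 0) :
    (-π * α₂ * s ^ 2 + 2 * π * I * ((r₂ * q - γ₂) * s)) -
        (-2 * π * α₂ * s + 2 * π * I * (r₂ * q - γ₂ - (r₁ * p - γ₁) + t)) ^ 2 / (4 * -(π * α))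
      = -2 * π * I * (α₂ * s * t / α) + -π * α₁ * α₂ * s ^ 2 / α + -π * t ^ 2 / α +
        -π * (γ₁ - γ₂) ^ 2 / α + 2 * π * (γ₂ - γ₁) * t / α +
        -2 * π * I * ((α₂ * γ₁ + α₁ * γ₂) * s / α) +
        2 * π * I * ((α₁ * r₂ * q + α₂ * r₁ * p) * s / α) +
        2 * π / α * (γ₂ - γ₁) * (r₂ * q - r₁ * p) +
        -(π / α) * ((r₂ * q - r₁ * p) ^ 2 + 2 * t * (r₂ * q - r₁ * p)) := by
  have hπ : (π : ℂ) ≠ 0 := ofReal_ne_zero.mpr pi_ne_zero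
  subst hα
  field_simp
  ring_nf
  simp only [I_sq]
  ring

theorem gaussian_theta_inner_product
    (α₁ α₂ r₁ r₂ γ₁ γ₂ : ℝ) (hα₁ : 0 < α₁) (hα₂ : 0 < α₂)
    (α : ℝ) (hα : α = α₁ + α₂)
    (a b : ℤ → ℂ)
    (ha : ∀ k : ℕ, ∃ C : ℝ, ∀ p : ℤ, (|p| : ℝ) ^ k * ‖a p‖ ≤ C)
    (hb : ∀ k : ℕ, ∃ C : ℝ, ∀ q : ℤ, (|q| : ℝ) ^ k * ‖b q‖ ≤ C)
    (f₁ f₂ : ℝ → ℂ)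
    (hf₁ : ∀ x : ℝ, f₁ x = Complex.exp (-Real.pi * α₁ * x ^ 2) *
      ∑' p : ℤ, a p * Complex.exp (2 * Real.pi * Complex.I * ((r₁ * p - γ₁) * x)))
    (hf₂ : ∀ x : ℝ, f₂ x = Complex.exp (-Real.pi * α₂ * x ^ 2) *
      ∑' q : ℤ, b q * Complex.exp (2 * Real.pi * Complex.I * ((r₂ * q - γ₂) * x)))
    (s t : ℝ) :
    ∫ x : ℝ, (starRingEnd ℂ) (f₁ x) * f₂ (x + s) * Complex.exp (2 * Real.pi * Complex.I * (t * x))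
      = (1 / Real.sqrt α) * Complex.exp (-2 * Real.pi * Complex.I * (α₂ * s * t / α)) *
        Complex.exp (-Real.pi * α₁ * α₂ * s ^ 2 / α) *
        Complex.exp (-Real.pi * t ^ 2 / α) *
        Complex.exp (-Real.pi * (γ₁ - γ₂) ^ 2 / α) *
        Complex.exp (2 * Real.pi * (γ₂ - γ₁) * t / α) *
        Complex.exp (-2 * Real.pi * Complex.I * ((α₂ * γ₁ + α₁ * γ₂) * s / α)) *
        ∑' pq : ℤ × ℤ,
          (starRingEnd ℂ) (a pq.1) * b pq.2 *
            Complex.exp (2 * Real.pi * Complex.I * ((α₁ * r₂ * pq.2 + α₂ * r₁ * pq.1) * s / α)) *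
            Complex.exp ((2 * Real.pi / α) * (γ₂ - γ₁) * (r₂ * pq.2 - r₁ * pq.1)) *
            Complex.exp (-(Real.pi / α) *
              ((r₂ * pq.2 - r₁ * pq.1) ^ 2 + 2 * t * (r₂ * pq.2 - r₁ * pq.1))) := by
  have hαpos : 0 < α := hα ▸ add_pos hα₁ hα₂
  have hαC : (α₁ : ℂ) + α₂ = α := by rw [hα, ofReal_add]
  obtain ⟨Ca, hCa⟩ := ha 2
  obtain ⟨Cb, hCb⟩ := hb 2
  have hsa := summable_norm_of_abs_pow_mul_norm_le one_lt_two hCa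
  have hsb := summable_norm_of_abs_pow_mul_norm_le one_lt_two hCb
  have hw : Summable fun pq : ℤ × ℤ => ‖conj (a pq.1) * b pq.2‖ := by
    simpa using hsa.mul_norm hsb
  simp_rw [hf₁, hf₂, ofReal_add, conj_gaussian_series_mul_gaussian_series hsa hsb, hαC]
  rw [integral_tsum_mul_cexp_quadratic hw (by simpa using mul_pos pi_pos hαpos)
      (c₀ := -2 * π * α₂ * s) (d₀ := -π * α₂ * s ^ 2) (fun _ => by simp)
      (fun _ => by simp [← ofReal_pow]),
    cpow_one_half_pi_div_pi_mul hαpos, ← tsum_mul_left]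
  refine tsum_congr fun pq => ?_
  rw [gaussian_exponent_eq _ _ _ _ _ _ _ _ _ _ _ hαC.symm (ofReal_ne_zero.mpr hαpos.ne')]
  simp only [Complex.exp_add]
  ring
end

section
/- Define τ_α = 2(α + 1/α) for α > 0. Then τ_α ≥ 4 for all α > 0, with equality iff α = 1; and the function L(α) = 2·ϑ₃(π/2, 2iα)·ϑ₃(π/2, iτ_α) satisfies: for α ≥ 1/4, L(α) > 1.17, and L(α) → 2 as α → ∞. -/
set_option maxHeartbeats 1000000


open Filter Topology

namespace ThetaAux

/-- The signed nat-indexed tail terms. -/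
noncomputable def u (x : ℝ) (n : ℕ) : ℝ :=
  (-1 : ℝ) ^ (n + 1) * Real.exp (-Real.pi * x * ((n : ℝ) + 1) ^ 2)

lemma abs_u (x : ℝ) (n : ℕ) : |u x n| = Real.exp (-Real.pi * x * ((n : ℝ) + 1) ^ 2) := by
  rw [u, abs_mul, abs_pow, abs_neg, abs_one, one_pow, one_mul, Real.abs_exp]

lemma exp_lt_one' {x : ℝ} (hx : 0 < x) : Real.exp (-Real.pi * x) < 1 := by
  rw [Real.exp_lt_one_iff]
  nlinarith [Real.pi_pos]

lemma summable_geom (x : ℝ) (hx : 0 < x) :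
    Summable (fun n : ℕ => Real.exp (-Real.pi * x) ^ n) :=
  summable_geometric_of_lt_one (Real.exp_pos _).le (exp_lt_one' hx)

lemma exp_sq_le (x : ℝ) (hx : 0 < x) {a : ℝ} {k : ℕ} (ha : 0 ≤ a) (hk : (k : ℝ) ≤ a ^ 2) :
    Real.exp (-Real.pi * x * a ^ 2) ≤ Real.exp (-Real.pi * x) ^ k := by
  rw [← Real.exp_nat_mul]
  apply Real.exp_le_exp.2
  have hpx : 0 < Real.pi * x := mul_pos Real.pi_pos hx
  nlinarith [mul_le_mul_of_nonneg_left hk hpx.le]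

lemma summable_absu (x : ℝ) (hx : 0 < x) :
    Summable (fun n : ℕ => |u x n|) := by
  apply Summable.of_nonneg_of_le (fun n => abs_nonneg _) (fun n => ?_) (summable_geom x hx)
  rw [abs_u]
  refine exp_sq_le x hx (by positivity) ?_
  nlinarith [(Nat.cast_nonneg n : (0:ℝ) ≤ n)]

lemma summable_u (x : ℝ) (hx : 0 < x) : Summable (u x) :=
  Summable.of_norm (by simpa [Real.norm_eq_abs] using summable_absu x hx)

/-- Representation of the theta value at z = π/2. -/
lemma repr (x : ℝ) (hx : 0 < x) :
    theta3R (Real.pi / 2) x = 1 + 2 * ∑' n : ℕ, u x n := by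
  have hterm : ∀ n : ℤ,
      Real.exp (-Real.pi * x * (n : ℝ) ^ 2) * Real.cos (2 * (n : ℝ) * (Real.pi / 2))
        = (-1 : ℝ) ^ n * Real.exp (-Real.pi * x * (n : ℝ) ^ 2) := by
    intro n
    have h2 : 2 * (n : ℝ) * (Real.pi / 2) = (n : ℝ) * Real.pi - 0 := by ring
    rw [h2, Real.cos_int_mul_pi_sub, Real.cos_zero, mul_one, mul_comm]
  set g : ℤ → ℝ := fun n => (-1 : ℝ) ^ n * Real.exp (-Real.pi * x * (n : ℝ) ^ 2) with hg
  have h0 : theta3R (Real.pi / 2) x = ∑' n : ℤ, g n := tsum_congr hterm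
  have hgnat : ∀ n : ℕ, g (n : ℤ) = (-1 : ℝ) ^ n * Real.exp (-Real.pi * x * (n : ℝ) ^ 2) := by
    intro n
    simp [hg, zpow_natCast]
  have hgneg : ∀ n : ℕ, g (-((n : ℤ) + 1)) = u x n := by
    intro n
    have h1 : ((-((n : ℤ) + 1) : ℤ) : ℝ) = -((n : ℝ) + 1) := by push_cast; ring
    have h2 : ((-((n : ℤ) + 1) : ℤ) : ℝ) ^ 2 = ((n : ℝ) + 1) ^ 2 := by rw [h1]; ring
    have h3 : (-1 : ℝ) ^ (-((n : ℤ) + 1)) = (-1 : ℝ) ^ (n + 1) := by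
      have he : ((n : ℤ) + 1) = ((n + 1 : ℕ) : ℤ) := by push_cast; ring
      rw [zpow_neg, he, zpow_natCast, ← inv_pow, inv_neg, inv_one]
    simp only [hg, u, h2, h3]
  have hs1 : Summable (fun n : ℕ => g (n : ℤ)) := by
    apply Summable.of_norm
    apply Summable.of_nonneg_of_le (fun n => norm_nonneg _) (fun n => ?_) (summable_geom x hx)
    rw [hgnat]
    rw [Real.norm_eq_abs, abs_mul, abs_pow, abs_neg, abs_one, one_pow, one_mul, Real.abs_exp]
    refine exp_sq_le x hx (Nat.cast_nonneg n) ?_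
    rcases Nat.eq_zero_or_pos n with h | h
    · subst h; norm_num
    · have h1 : (1 : ℝ) ≤ (n : ℝ) := by exact_mod_cast h
      nlinarith
  have hs2 : Summable (fun n : ℕ => g (-((n : ℤ) + 1))) := by
    apply Summable.congr (summable_u x hx)
    intro n
    exact (hgneg n).symm
  rw [h0, tsum_of_nat_of_neg_add_one hs1 hs2]
  have e1 : ∑' n : ℕ, g (n : ℤ) = 1 + ∑' n : ℕ, u x n := by
    rw [Summable.tsum_eq_zero_add hs1]
    congr 1
    · norm_num [hg]
    · apply tsum_congr
      intro n
      rw [hgnat (n + 1)]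
      push_cast
      rw [u]
  have e2 : ∑' n : ℕ, g (-((n : ℤ) + 1)) = ∑' n : ℕ, u x n := tsum_congr hgneg
  rw [e1, e2]
  ring

/-- The key tail estimate for x ≥ 1/2. -/
lemma Sbound (x : ℝ) (hx : (1 : ℝ) / 2 ≤ x) :
    |(∑' n : ℕ, u x n) + Real.exp (-Real.pi * x) - Real.exp (-Real.pi * x) ^ 4|
      ≤ 2 * Real.exp (-Real.pi * x) ^ 9 := by
  have hx0 : 0 < x := by linarith
  set r : ℝ := Real.exp (-Real.pi * x) with hr
  have hr0 : 0 < r := Real.exp_pos _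
  have hr1 : r < 1 := exp_lt_one' hx0
  have hrhalf : r ≤ 1 / 2 := by
    have h1 : Real.exp (-Real.pi * x) ≤ Real.exp (-(3 / 2 : ℝ)) := by
      apply Real.exp_le_exp.2
      nlinarith [Real.pi_gt_three]
    have h2 : Real.exp (-(3 / 2 : ℝ)) ≤ 1 / 2 := by
      rw [Real.exp_neg]
      rw [inv_le_comm₀ (Real.exp_pos _) (by norm_num)]
      calc ((1:ℝ) / 2)⁻¹ = 2 := by norm_num
        _ ≤ 1 + 3 / 2 + (3 / 2 : ℝ) ^ 2 / 2 := by norm_num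
        _ ≤ Real.exp (3 / 2) := Real.quadratic_le_exp_of_nonneg (by norm_num)
    linarith
  have hsum := summable_u x hx0
  have hsum1 : Summable (fun n : ℕ => u x (n + 1)) := (summable_nat_add_iff 1).2 hsum
  have hsum2 : Summable (fun n : ℕ => u x (n + 1 + 1)) := (summable_nat_add_iff 1).2 hsum1
  have hsplit : ∑' n : ℕ, u x n = u x 0 + (u x 1 + ∑' n : ℕ, u x (n + 1 + 1)) := by
    rw [Summable.tsum_eq_zero_add hsum, Summable.tsum_eq_zero_add hsum1]
  have hu0 : u x 0 = -r := by
    rw [u, hr]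
    norm_num
  have hu1 : u x 1 = r ^ 4 := by
    have ha : u x 1 = Real.exp (-Real.pi * x * ((1 : ℝ) + 1) ^ 2) := by
      rw [u]; norm_num
    have hb' : r ^ 4 = Real.exp (((4 : ℕ) : ℝ) * (-Real.pi * x)) := by
      rw [hr, ← Real.exp_nat_mul]
    rw [ha, hb']
    congr 1
    push_cast
    ring
  -- bound the remainder R = ∑' n, u x (n+2)
  have habs2 : Summable (fun n : ℕ => ‖u x (n + 1 + 1)‖) := by
    simpa [Real.norm_eq_abs] using ((summable_nat_add_iff (f := fun n => |u x n|) 2).2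
      (summable_absu x hx0))
  have hRbound : |∑' n : ℕ, u x (n + 1 + 1)| ≤ 2 * r ^ 9 := by
    have h1 : |∑' n : ℕ, u x (n + 1 + 1)| ≤ ∑' n : ℕ, ‖u x (n + 1 + 1)‖ := by
      simpa [Real.norm_eq_abs] using norm_tsum_le_tsum_norm habs2
    have h3lt : r ^ 3 < 1 := pow_lt_one₀ hr0.le hr1 (by norm_num)
    have hgeom3 : Summable (fun n : ℕ => (r ^ 3) ^ (n + 3)) := by
      apply Summable.of_nonneg_of_le (fun n => by positivity) (fun n => ?_)
        (summable_geometric_of_lt_one (by positivity) h3lt)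
      exact pow_le_pow_of_le_one (by positivity) h3lt.le (by omega)
    have h2 : ∑' n : ℕ, ‖u x (n + 1 + 1)‖ ≤ ∑' n : ℕ, (r ^ 3) ^ (n + 3) := by
      apply Summable.tsum_le_tsum _ habs2 hgeom3
      intro n
      rw [Real.norm_eq_abs, abs_u, ← pow_mul, hr]
      refine exp_sq_le x hx0 (by positivity) ?_
      push_cast
      nlinarith [(Nat.cast_nonneg n : (0:ℝ) ≤ n)]
    have h3 : ∑' n : ℕ, (r ^ 3) ^ (n + 3) = (1 - r ^ 3)⁻¹ * (r ^ 3) ^ 3 := by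
      have : ∀ n : ℕ, (r ^ 3) ^ (n + 3) = (r ^ 3) ^ n * (r ^ 3) ^ 3 := fun n => pow_add _ _ _
      rw [tsum_congr this, tsum_mul_right, tsum_geometric_of_lt_one (by positivity) h3lt]
    have h4 : (1 - r ^ 3)⁻¹ * (r ^ 3) ^ 3 ≤ 2 * r ^ 9 := by
      have hr3 : r ^ 3 ≤ 1 / 2 := by
        have h := pow_le_pow_of_le_one hr0.le hr1.le (show 1 ≤ 3 by norm_num)
        simp only [pow_one] at h
        linarith
      have h5 : (1 - r ^ 3)⁻¹ ≤ 2 := by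
        rw [inv_le_comm₀ (by nlinarith) (by norm_num)]
        nlinarith
      have h6 : (r ^ 3) ^ 3 = r ^ 9 := by ring
      rw [h6]
      have h7 : (0 : ℝ) ≤ r ^ 9 := by positivity
      nlinarith
    linarith
  rw [hsplit, hu0, hu1]
  have : -r + (r ^ 4 + ∑' n : ℕ, u x (n + 1 + 1)) + r - r ^ 4 = ∑' n : ℕ, u x (n + 1 + 1) := by
    ring
  rw [this]
  exact hRbound

lemma theta_lb (x : ℝ) (hx : (1 : ℝ) / 2 ≤ x) :
    1 - 2 * Real.exp (-Real.pi * x) + 2 * Real.exp (-Real.pi * x) ^ 4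
      - 4 * Real.exp (-Real.pi * x) ^ 9 ≤ theta3R (Real.pi / 2) x := by
  have hx0 : 0 < x := by linarith
  rw [repr x hx0]
  have hb := (abs_le.1 (Sbound x hx)).1
  linarith

lemma theta_near_one (x : ℝ) (hx : (1 : ℝ) / 2 ≤ x) :
    |theta3R (Real.pi / 2) x - 1| ≤ 8 * Real.exp (-Real.pi * x) := by
  have hx0 : 0 < x := by linarith
  rw [repr x hx0]
  have hb := abs_le.1 (Sbound x hx)
  set r : ℝ := Real.exp (-Real.pi * x) with hr
  have hr0 : 0 < r := Real.exp_pos _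
  have hr1 : r < 1 := exp_lt_one' hx0
  have h4 : r ^ 4 ≤ r := by
    have := pow_le_pow_of_le_one hr0.le hr1.le (show 1 ≤ 4 by norm_num)
    simpa using this
  have h9 : r ^ 9 ≤ r := by
    have := pow_le_pow_of_le_one hr0.le hr1.le (show 1 ≤ 9 by norm_num)
    simpa using this
  rw [abs_le]
  constructor
  · nlinarith [hb.1, pow_nonneg hr0.le 4, h9]
  · nlinarith [hb.2, h4, h9, pow_nonneg hr0.le 9]

lemma exp_neg_pi_half : Real.exp (-(Real.pi / 2)) ≤ 0.2084 := by
  have h2 : (4.8 : ℝ) ≤ Real.exp (Real.pi / 2) := by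
    calc (4.8 : ℝ) ≤ ∑ i ∈ Finset.range 11, ((3.141592 : ℝ) / 2) ^ i / i.factorial := by
          norm_num [Finset.sum_range_succ, Nat.factorial]
      _ ≤ ∑ i ∈ Finset.range 11, (Real.pi / 2) ^ i / i.factorial := by
          apply Finset.sum_le_sum
          intro i _
          gcongr
          all_goals (try norm_num)
          all_goals linarith [Real.pi_gt_d6]
      _ ≤ Real.exp (Real.pi / 2) := Real.sum_le_exp_of_nonneg (by positivity) 11
  rw [Real.exp_neg, inv_le_comm₀ (Real.exp_pos _) (by norm_num)]
  calc (0.2084 : ℝ)⁻¹ ≤ 4.8 := by norm_num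
    _ ≤ Real.exp (Real.pi / 2) := h2

lemma r_le (x : ℝ) (hx : (1 : ℝ) / 2 ≤ x) : Real.exp (-Real.pi * x) ≤ 0.2084 := by
  calc Real.exp (-Real.pi * x) ≤ Real.exp (-(Real.pi / 2)) := by
        apply Real.exp_le_exp.2
        nlinarith [Real.pi_pos]
    _ ≤ 0.2084 := exp_neg_pi_half

lemma theta_ge_A (x : ℝ) (hx : (1 : ℝ) / 2 ≤ x) : (0.5869 : ℝ) ≤ theta3R (Real.pi / 2) x := by
  have h := theta_lb x hx
  set r : ℝ := Real.exp (-Real.pi * x) with hr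
  have hr0 : 0 < r := Real.exp_pos _
  have h1 : r ≤ 0.2084 := r_le x hx
  have key : (0.5869 : ℝ) ≤ 1 - 2 * r + 2 * r ^ 4 - 4 * r ^ 9 := by
    nlinarith [mul_nonneg (sub_nonneg.2 h1) (pow_nonneg hr0.le 3),
      mul_nonneg (sub_nonneg.2 h1) (pow_nonneg hr0.le 8),
      pow_nonneg hr0.le 3, pow_nonneg hr0.le 8, sq_nonneg r,
      pow_le_pow_left₀ hr0.le h1 3, pow_le_pow_left₀ hr0.le h1 8]
  linarith

lemma theta_ge_B (x : ℝ) (hx : (4 : ℝ) ≤ x) : (0.999 : ℝ) ≤ theta3R (Real.pi / 2) x := by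
  have h := theta_lb x (by linarith)
  set r : ℝ := Real.exp (-Real.pi * x) with hr
  have hr0 : 0 < r := Real.exp_pos _
  have hr1 : r < 1 := exp_lt_one' (by linarith)
  have hsmall : r ≤ 1 / 15625 := by
    have h1 : Real.exp (-Real.pi * x) ≤ Real.exp ((6 : ℕ) * (-2 : ℝ)) := by
      apply Real.exp_le_exp.2
      push_cast
      nlinarith [Real.pi_gt_three]
    have h2 : Real.exp ((6 : ℕ) * (-2 : ℝ)) = Real.exp (-2) ^ 6 := Real.exp_nat_mul _ 6
    have h3 : Real.exp (-2 : ℝ) ≤ 1 / 5 := by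
      rw [Real.exp_neg, inv_le_comm₀ (Real.exp_pos _) (by norm_num)]
      calc ((1 : ℝ) / 5)⁻¹ = 5 := by norm_num
        _ ≤ 1 + 2 + (2 : ℝ) ^ 2 / 2 := by norm_num
        _ ≤ Real.exp 2 := Real.quadratic_le_exp_of_nonneg (by norm_num)
    have h4 : Real.exp (-2 : ℝ) ^ 6 ≤ (1 / 5 : ℝ) ^ 6 :=
      pow_le_pow_left₀ (Real.exp_pos _).le h3 6
    rw [hr]
    calc Real.exp (-Real.pi * x) ≤ Real.exp (-2 : ℝ) ^ 6 := by rw [← h2]; exact h1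
      _ ≤ (1 / 5 : ℝ) ^ 6 := h4
      _ = 1 / 15625 := by norm_num
  have h4 : r ^ 4 ≤ r := by
    have := pow_le_pow_of_le_one hr0.le hr1.le (show 1 ≤ 4 by norm_num)
    simpa using this
  have h9 : r ^ 9 ≤ r := by
    have := pow_le_pow_of_le_one hr0.le hr1.le (show 1 ≤ 9 by norm_num)
    simpa using this
  have hpow4 : (0 : ℝ) ≤ r ^ 4 := by positivity
  nlinarith

lemma theta_tendsto : Tendsto (fun x : ℝ => theta3R (Real.pi / 2) x) atTop (𝓝 1) := by
  have hexp : Tendsto (fun x : ℝ => Real.exp (-Real.pi * x)) atTop (𝓝 0) := by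
    apply Real.tendsto_exp_atBot.comp
    have h1 : Tendsto (fun x : ℝ => Real.pi * x) atTop atTop :=
      Tendsto.const_mul_atTop Real.pi_pos tendsto_id
    have h2 : Tendsto (fun x : ℝ => -(Real.pi * x)) atTop atBot :=
      tendsto_neg_atTop_atBot.comp h1
    refine h2.congr fun x => by ring
  have hg : Tendsto (fun x : ℝ => 1 - 8 * Real.exp (-Real.pi * x)) atTop (𝓝 1) := by
    have := tendsto_const_nhds (α := ℝ) (x := (1 : ℝ)) |>.sub (hexp.const_mul 8)
    simpa using this
  have hh : Tendsto (fun x : ℝ => 1 + 8 * Real.exp (-Real.pi * x)) atTop (𝓝 1) := by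
    have := tendsto_const_nhds (α := ℝ) (x := (1 : ℝ)) |>.add (hexp.const_mul 8)
    simpa using this
  apply tendsto_of_tendsto_of_tendsto_of_le_of_le' hg hh
  · filter_upwards [eventually_ge_atTop ((1 : ℝ) / 2)] with x hx
    linarith [(abs_le.1 (theta_near_one x hx)).1]
  · filter_upwards [eventually_ge_atTop ((1 : ℝ) / 2)] with x hx
    linarith [(abs_le.1 (theta_near_one x hx)).2]

lemma tau_ge (α : ℝ) (hα : 0 < α) : 4 ≤ 2 * (α + 1 / α) := by
  have h1 : α * (1 / α) = 1 := by field_simp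
  nlinarith [sq_nonneg (α - 1), mul_pos hα hα]

end ThetaAux

theorem tau_ge_four_and_L_bounds :
    (∀ α : ℝ, 0 < α → 4 ≤ 2 * (α + 1 / α) ∧ (2 * (α + 1 / α) = 4 ↔ α = 1)) ∧
    (∀ α : ℝ, 1 / 4 ≤ α →
      1.17 < 2 * theta3R (Real.pi / 2) (2 * α) * theta3R (Real.pi / 2) (2 * (α + 1 / α))) ∧
    Tendsto (fun α : ℝ => 2 * theta3R (Real.pi / 2) (2 * α) * theta3R (Real.pi / 2) (2 * (α + 1 / α)))
      atTop (𝓝 2) := by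
  refine ⟨fun α hα => ⟨ThetaAux.tau_ge α hα, ?_, ?_⟩, fun α hα => ?_, ?_⟩
  · -- equality implies α = 1
    intro h
    have hne : α ≠ 0 := hα.ne'
    have h1 : α * (1 / α) = 1 := by field_simp
    have h2 : (α - 1) ^ 2 = 0 := by nlinarith
    have h3 : α - 1 = 0 := by
      exact pow_eq_zero_iff (by norm_num) |>.1 h2
    linarith
  · rintro rfl
    norm_num
  · -- 1.17 bound
    have hα0 : 0 < α := lt_of_lt_of_le (by norm_num) hα
    have h2α : (1 : ℝ) / 2 ≤ 2 * α := by linarith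
    have hτ : (4 : ℝ) ≤ 2 * (α + 1 / α) := ThetaAux.tau_ge α hα0
    have hA := ThetaAux.theta_ge_A (2 * α) h2α
    have hB := ThetaAux.theta_ge_B (2 * (α + 1 / α)) hτ
    nlinarith [mul_nonneg (sub_nonneg.2 hA) (sub_nonneg.2 hB)]
  · -- the limit
    have h1 : Tendsto (fun α : ℝ => 2 * α) atTop atTop :=
      Tendsto.const_mul_atTop (by norm_num) tendsto_id
    have h2 : Tendsto (fun α : ℝ => 2 * (α + 1 / α)) atTop atTop := by
      apply tendsto_atTop_mono' atTop _ h1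
      filter_upwards [eventually_gt_atTop (0 : ℝ)] with α hα
      have : 0 < 1 / α := by positivity
      linarith
    have hc1 := ThetaAux.theta_tendsto.comp h1
    have hc2 := ThetaAux.theta_tendsto.comp h2
    have hfin := (tendsto_const_nhds (x := (2 : ℝ)) |>.mul hc1).mul hc2
    simpa using hfin
end

section
/- For every real α > 0.2568, with β² = 4(α² + 1), one has 1.19782 · (ϑ₃(0, 2iα)/ϑ₃(π/2, 2iα)) · (ϑ₃(0, (i/2)αβ²) − 1) < 1. -/
open Real Finset Nat
set_option maxHeartbeats 2000000

namespace ThetaAux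

lemma summable_sq {q : ℝ} (h0 : 0 ≤ q) (h1 : q < 1) (k : ℕ) :
    Summable (fun n : ℕ => q ^ ((n + k) ^ 2)) := by
  apply Summable.of_nonneg_of_le (fun n => pow_nonneg h0 _)
    (fun n => pow_le_pow_of_le_one h0 h1.le ?_)
    (summable_geometric_of_lt_one h0 h1)
  exact le_trans (Nat.le_add_right n k) (Nat.le_self_pow two_ne_zero _)

lemma summable_sq_sign {q : ℝ} (h0 : 0 ≤ q) (h1 : q < 1) (k : ℕ) :
    Summable (fun n : ℕ => (-1 : ℝ) ^ (n + k) * q ^ ((n + k) ^ 2)) := by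
  apply Summable.of_abs
  have : (fun n : ℕ => |(-1 : ℝ) ^ (n + k) * q ^ ((n + k) ^ 2)|)
      = fun n : ℕ => q ^ ((n + k) ^ 2) := by
    funext n
    rw [abs_mul, abs_pow, abs_neg, abs_one, one_pow, one_mul, abs_pow,
      abs_of_nonneg h0]
  rw [this]
  exact summable_sq h0 h1 k

lemma exp_eq_pow {x : ℝ} (n : ℤ) :
    Real.exp (-Real.pi * x * (n : ℝ) ^ 2) = Real.exp (-Real.pi * x) ^ (n.natAbs ^ 2) := by
  rw [← Real.exp_nat_mul]
  congr 1
  have h : ((n.natAbs ^ 2 : ℕ) : ℝ) = (n : ℝ) ^ 2 := by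
    push_cast [Nat.cast_natAbs, Int.cast_abs]
    rw [sq_abs]
  rw [h]; ring

lemma cos_nat (n : ℕ) : Real.cos (n * Real.pi) = (-1 : ℝ) ^ n := by
  simpa using Real.cos_nat_mul_pi_sub 0 n

lemma cos_int (n : ℤ) : Real.cos (n * Real.pi) = (-1 : ℝ) ^ n.natAbs := by
  have h : Real.cos ((n.natAbs : ℝ) * Real.pi) = (-1 : ℝ) ^ n.natAbs := cos_nat _
  rw [Nat.cast_natAbs, Int.cast_abs] at h
  rcases abs_cases (n : ℝ) with ⟨he, _⟩ | ⟨he, _⟩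
  · rwa [he] at h
  · rw [he] at h; rwa [neg_mul, Real.cos_neg] at h

lemma natAbs_neg_succ (n : ℕ) : ((-((n : ℤ) + 1))).natAbs = n + 1 := by omega

/-- θ₃(0, ix) = 1 + 2 Σ_{n≥1} q^{n²}. -/
lemma theta_zero (x : ℝ) (hx : 0 < x) :
    theta3R 0 x = 1 + 2 * ∑' n : ℕ, Real.exp (-Real.pi * x) ^ ((n + 1) ^ 2) := by
  set q := Real.exp (-Real.pi * x) with hq
  have h0 : 0 ≤ q := (Real.exp_pos _).le
  have h1 : q < 1 := by
    rw [hq, ← Real.exp_zero]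
    exact Real.exp_lt_exp.2 (by nlinarith [Real.pi_pos])
  have heq : theta3R 0 x = ∑' n : ℤ, q ^ (n.natAbs ^ 2) := by
    unfold theta3R
    refine tsum_congr fun n => ?_
    rw [mul_zero, Real.cos_zero, mul_one, exp_eq_pow]
  rw [heq]
  have hs0 : Summable (fun n : ℕ => q ^ (n ^ 2)) :=
    (summable_sq h0 h1 0).congr fun n => by norm_num
  have hpos : Summable (fun n : ℕ => q ^ ((n : ℤ).natAbs ^ 2)) :=
    hs0.congr fun n => by simp
  have hneg : Summable (fun n : ℕ => q ^ ((-((n : ℤ) + 1)).natAbs ^ 2)) :=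
    (summable_sq h0 h1 1).congr fun n => by rw [natAbs_neg_succ n]
  rw [tsum_of_nat_of_neg_add_one (f := fun n : ℤ => q ^ (n.natAbs ^ 2)) hpos hneg]
  have e1 : ∑' n : ℕ, q ^ ((n : ℤ).natAbs ^ 2) = 1 + ∑' n : ℕ, q ^ ((n + 1) ^ 2) := by
    rw [show (fun n : ℕ => q ^ ((n : ℤ).natAbs ^ 2)) = fun n : ℕ => q ^ (n ^ 2) by
      funext n; simp]
    simpa using Summable.tsum_eq_zero_add hs0
  have e2 : ∑' n : ℕ, q ^ ((-((n : ℤ) + 1)).natAbs ^ 2) = ∑' n : ℕ, q ^ ((n + 1) ^ 2) :=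
    tsum_congr fun n => by rw [natAbs_neg_succ n]
  rw [e1, e2]; ring

/-- θ₃(π/2, ix) = 1 + 2 Σ_{n≥1} (-1)^n q^{n²}. -/
lemma theta_half (x : ℝ) (hx : 0 < x) :
    theta3R (Real.pi / 2) x
      = 1 + 2 * ∑' n : ℕ, (-1 : ℝ) ^ (n + 1) * Real.exp (-Real.pi * x) ^ ((n + 1) ^ 2) := by
  set q := Real.exp (-Real.pi * x) with hq
  have h0 : 0 ≤ q := (Real.exp_pos _).le
  have h1 : q < 1 := by
    rw [hq, ← Real.exp_zero]
    exact Real.exp_lt_exp.2 (by nlinarith [Real.pi_pos])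
  have heq : theta3R (Real.pi / 2) x
      = ∑' n : ℤ, (-1 : ℝ) ^ n.natAbs * q ^ (n.natAbs ^ 2) := by
    unfold theta3R
    refine tsum_congr fun n => ?_
    rw [exp_eq_pow, show (2 : ℝ) * n * (Real.pi / 2) = n * Real.pi by ring, cos_int]
    ring
  rw [heq]
  have hs0 : Summable (fun n : ℕ => (-1 : ℝ) ^ n * q ^ (n ^ 2)) :=
    (summable_sq_sign h0 h1 0).congr fun n => by norm_num
  have hpos : Summable (fun n : ℕ => (-1 : ℝ) ^ ((n : ℤ)).natAbs * q ^ ((n : ℤ)).natAbs ^ 2) :=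
    hs0.congr fun n => by simp
  have hneg : Summable
      (fun n : ℕ => (-1 : ℝ) ^ ((-((n : ℤ) + 1)).natAbs) * q ^ ((-((n : ℤ) + 1)).natAbs ^ 2)) :=
    (summable_sq_sign h0 h1 1).congr fun n => by rw [natAbs_neg_succ n]
  rw [tsum_of_nat_of_neg_add_one
    (f := fun n : ℤ => (-1 : ℝ) ^ n.natAbs * q ^ (n.natAbs ^ 2)) hpos hneg]
  have e1 : ∑' n : ℕ, (-1 : ℝ) ^ ((n : ℤ)).natAbs * q ^ ((n : ℤ)).natAbs ^ 2
      = 1 + ∑' n : ℕ, (-1 : ℝ) ^ (n + 1) * q ^ ((n + 1) ^ 2) := by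
    rw [show (fun n : ℕ => (-1 : ℝ) ^ ((n : ℤ)).natAbs * q ^ ((n : ℤ)).natAbs ^ 2)
        = fun n : ℕ => (-1 : ℝ) ^ n * q ^ (n ^ 2) by funext n; simp]
    simpa using Summable.tsum_eq_zero_add hs0
  have e2 : ∑' n : ℕ, (-1 : ℝ) ^ ((-((n : ℤ) + 1)).natAbs) * q ^ ((-((n : ℤ) + 1)).natAbs ^ 2)
      = ∑' n : ℕ, (-1 : ℝ) ^ (n + 1) * q ^ ((n + 1) ^ 2) :=
    tsum_congr fun n => by rw [natAbs_neg_succ n]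
  rw [e1, e2]; ring

lemma tail_le {q : ℝ} (h0 : 0 ≤ q) (h1 : q < 1) :
    ∑' n : ℕ, q ^ ((n + 3) ^ 2) ≤ q ^ 9 / (1 - q) := by
  have hfe : (fun n : ℕ => q ^ (9 + n)) = fun n : ℕ => q ^ 9 * q ^ n := by
    funext n; rw [pow_add]
  have hgeo : Summable (fun n : ℕ => q ^ (9 + n)) :=
    hfe ▸ (summable_geometric_of_lt_one h0 h1).mul_left _
  have hle : ∑' n : ℕ, q ^ ((n + 3) ^ 2) ≤ ∑' n : ℕ, q ^ (9 + n) := by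
    refine Summable.tsum_le_tsum (fun n => pow_le_pow_of_le_one h0 h1.le ?_)
      (summable_sq h0 h1 3) hgeo
    have : (n + 3) ^ 2 = n * n + 6 * n + 9 := by ring
    omega
  refine hle.trans (le_of_eq ?_)
  rw [hfe, tsum_mul_left, tsum_geometric_of_lt_one h0 h1, div_eq_mul_inv]

lemma sum_le {q : ℝ} (h0 : 0 ≤ q) (h1 : q < 1) :
    ∑' n : ℕ, q ^ ((n + 1) ^ 2) ≤ q + q ^ 4 + q ^ 9 / (1 - q) := by
  have hs1 : Summable (fun n : ℕ => q ^ ((n + 1) ^ 2)) := summable_sq h0 h1 1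
  have hs2 : Summable (fun n : ℕ => q ^ ((n + 2) ^ 2)) := summable_sq h0 h1 2
  rw [Summable.tsum_eq_zero_add hs1]
  rw [show (fun n : ℕ => q ^ ((n + 1 + 1) ^ 2)) = fun n : ℕ => q ^ ((n + 2) ^ 2) by
    funext n; ring_nf]
  rw [Summable.tsum_eq_zero_add hs2]
  rw [show (fun n : ℕ => q ^ ((n + 1 + 2) ^ 2)) = fun n : ℕ => q ^ ((n + 3) ^ 2) by
    funext n; ring_nf]
  norm_num
  linarith [tail_le h0 h1]

lemma sum_nonneg' {q : ℝ} (h0 : 0 ≤ q) :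
    0 ≤ ∑' n : ℕ, q ^ ((n + 1) ^ 2) :=
  tsum_nonneg fun n => pow_nonneg h0 _

lemma alt_sum_ge {q : ℝ} (h0 : 0 ≤ q) (h1 : q < 1) :
    -q + q ^ 4 - q ^ 9 / (1 - q) ≤ ∑' n : ℕ, (-1 : ℝ) ^ (n + 1) * q ^ ((n + 1) ^ 2) := by
  have hs1 := summable_sq_sign h0 h1 1
  have hs2 := summable_sq_sign h0 h1 2
  rw [Summable.tsum_eq_zero_add hs1]
  rw [show (fun n : ℕ => (-1 : ℝ) ^ (n + 1 + 1) * q ^ ((n + 1 + 1) ^ 2))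
      = fun n : ℕ => (-1 : ℝ) ^ (n + 2) * q ^ ((n + 2) ^ 2) by funext n; ring_nf]
  rw [Summable.tsum_eq_zero_add hs2]
  rw [show (fun n : ℕ => (-1 : ℝ) ^ (n + 1 + 2) * q ^ ((n + 1 + 2) ^ 2))
      = fun n : ℕ => (-1 : ℝ) ^ (n + 3) * q ^ ((n + 3) ^ 2) by funext n; ring_nf]
  have hnorm : (fun n : ℕ => ‖(-1 : ℝ) ^ (n + 3) * q ^ ((n + 3) ^ 2)‖)
      = fun n : ℕ => q ^ ((n + 3) ^ 2) := by
    funext n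
    rw [Real.norm_eq_abs, abs_mul, abs_pow, abs_neg, abs_one, one_pow, one_mul,
      abs_pow, abs_of_nonneg h0]
  have habs : |∑' n : ℕ, (-1 : ℝ) ^ (n + 3) * q ^ ((n + 3) ^ 2)| ≤ q ^ 9 / (1 - q) := by
    have h := norm_tsum_le_tsum_norm
      (f := fun n : ℕ => (-1 : ℝ) ^ (n + 3) * q ^ ((n + 3) ^ 2))
      (hnorm ▸ summable_sq h0 h1 3)
    rw [Real.norm_eq_abs, hnorm] at h
    exact h.trans (tail_le h0 h1)
  have h2 := (abs_le.1 habs).1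
  norm_num
  linarith

end ThetaAux

theorem invertibility_estimate (α : ℝ) (hα : 0.2568 < α) :
    1.19782 * (theta3R 0 (2 * α) / theta3R (Real.pi / 2) (2 * α)) *
        (theta3R 0 ((1 / 2) * α * (4 * (α ^ 2 + 1))) - 1) < 1 := by
  have hα0 : 0 < α := by linarith
  have hx1 : (0 : ℝ) < 2 * α := by linarith
  have hx2 : (0 : ℝ) < (1 / 2) * α * (4 * (α ^ 2 + 1)) := by positivity
  set q : ℝ := Real.exp (-Real.pi * (2 * α)) with hqdef
  set r : ℝ := Real.exp (-Real.pi * ((1 / 2) * α * (4 * (α ^ 2 + 1)))) with hrdef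
  have hpi := Real.pi_gt_d6
  have hq0 : 0 < q := Real.exp_pos _
  have hr0 : 0 < r := Real.exp_pos _
  have hfac : ∀ P : Prop, P → P := fun _ h => h
  -- upper bound on q
  have hqub : q ≤ 0.19918493 := by
    have hc : -Real.pi * (2 * α) ≤ -(6.283184 * 0.2568) := by nlinarith
    refine (Real.exp_le_exp.2 hc).trans ?_
    rw [Real.exp_neg]
    have hsum : (1 : ℝ) / 0.19918493
        ≤ ∑ i ∈ Finset.range 13, (6.283184 * 0.2568 : ℝ) ^ i / i ! := by
      norm_num [Finset.sum_range_succ, show (3:ℕ)! = 6 from rfl, show (4:ℕ)! = 24 from rfl,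
        show (5:ℕ)! = 120 from rfl, show (6:ℕ)! = 720 from rfl, show (7:ℕ)! = 5040 from rfl,
        show (8:ℕ)! = 40320 from rfl, show (9:ℕ)! = 362880 from rfl,
        show (10:ℕ)! = 3628800 from rfl, show (11:ℕ)! = 39916800 from rfl,
        show (12:ℕ)! = 479001600 from rfl]
    have hexp : (1 : ℝ) / 0.19918493 ≤ Real.exp (6.283184 * 0.2568) :=
      hsum.trans (Real.sum_le_exp_of_nonneg (by norm_num) 13)
    rw [inv_le_comm₀ (Real.exp_pos _) (by norm_num)]
    linarith
  -- upper bound on r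
  have hrub : r ≤ 0.17907917 := by
    have hmono : (0.2568 : ℝ) * (0.2568 ^ 2 + 1) ≤ α * (α ^ 2 + 1) := by nlinarith
    have hc : -Real.pi * ((1 / 2) * α * (4 * (α ^ 2 + 1)))
        ≤ -(6.283184 * (0.2568 * (0.2568 ^ 2 + 1))) := by nlinarith
    refine (Real.exp_le_exp.2 hc).trans ?_
    rw [Real.exp_neg]
    have hsum : (1 : ℝ) / 0.17907917
        ≤ ∑ i ∈ Finset.range 14, (6.283184 * (0.2568 * (0.2568 ^ 2 + 1)) : ℝ) ^ i / i ! := by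
      norm_num [Finset.sum_range_succ, show (3:ℕ)! = 6 from rfl, show (4:ℕ)! = 24 from rfl,
        show (5:ℕ)! = 120 from rfl, show (6:ℕ)! = 720 from rfl, show (7:ℕ)! = 5040 from rfl,
        show (8:ℕ)! = 40320 from rfl, show (9:ℕ)! = 362880 from rfl,
        show (10:ℕ)! = 3628800 from rfl, show (11:ℕ)! = 39916800 from rfl,
        show (12:ℕ)! = 479001600 from rfl, show (13:ℕ)! = 6227020800 from rfl]
    have hexp : (1 : ℝ) / 0.17907917 ≤ Real.exp (6.283184 * (0.2568 * (0.2568 ^ 2 + 1))) :=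
      hsum.trans (Real.sum_le_exp_of_nonneg (by norm_num) 14)
    rw [inv_le_comm₀ (Real.exp_pos _) (by norm_num)]
    linarith
  have hq1 : q < 1 := by linarith
  have hr1 : r < 1 := by linarith
  set S := ∑' n : ℕ, q ^ ((n + 1) ^ 2) with hSdef
  set T := ∑' n : ℕ, (-1 : ℝ) ^ (n + 1) * q ^ ((n + 1) ^ 2) with hTdef
  set U := ∑' n : ℕ, r ^ ((n + 1) ^ 2) with hUdef
  have hth1 : theta3R 0 (2 * α) = 1 + 2 * S := ThetaAux.theta_zero _ hx1
  have hth2 : theta3R (Real.pi / 2) (2 * α) = 1 + 2 * T := ThetaAux.theta_half _ hx1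
  have hth3 : theta3R 0 ((1 / 2) * α * (4 * (α ^ 2 + 1))) = 1 + 2 * U := ThetaAux.theta_zero _ hx2
  have hS : S ≤ q + q ^ 4 + 1.25 * q ^ 9 := by
    refine (ThetaAux.sum_le hq0.le hq1).trans ?_
    have : q ^ 9 / (1 - q) ≤ 1.25 * q ^ 9 := by
      rw [div_le_iff₀ (by linarith)]
      nlinarith [pow_nonneg hq0.le 9]
    linarith
  have hS0 : 0 ≤ S := ThetaAux.sum_nonneg' hq0.le
  have hU : U ≤ r + r ^ 4 + 1.25 * r ^ 9 := by
    refine (ThetaAux.sum_le hr0.le hr1).trans ?_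
    have : r ^ 9 / (1 - r) ≤ 1.25 * r ^ 9 := by
      rw [div_le_iff₀ (by linarith)]
      nlinarith [pow_nonneg hr0.le 9]
    linarith
  have hU0 : 0 ≤ U := ThetaAux.sum_nonneg' hr0.le
  have hT : -q + q ^ 4 - 1.25 * q ^ 9 ≤ T := by
    refine le_trans ?_ (ThetaAux.alt_sum_ge hq0.le hq1)
    have : q ^ 9 / (1 - q) ≤ 1.25 * q ^ 9 := by
      rw [div_le_iff₀ (by linarith)]
      nlinarith [pow_nonneg hq0.le 9]
    linarith
  have hq4 : q ^ 4 ≤ 0.19918493 ^ 4 := pow_le_pow_left₀ hq0.le hqub 4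
  have hq9 : q ^ 9 ≤ 0.19918493 ^ 9 := pow_le_pow_left₀ hq0.le hqub 9
  have hr4 : r ^ 4 ≤ 0.17907917 ^ 4 := pow_le_pow_left₀ hr0.le hrub 4
  have hr9 : r ^ 9 ≤ 0.17907917 ^ 9 := pow_le_pow_left₀ hr0.le hrub 9
  have hB0 : (0 : ℝ) < 1 + 2 * T := by
    nlinarith [pow_nonneg hq0.le 4, pow_nonneg hq0.le 9]
  rw [hth1, hth2, hth3]
  have hrew : (1.19782 : ℝ) * ((1 + 2 * S) / (1 + 2 * T)) * (1 + 2 * U - 1)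
      = (1.19782 * (1 + 2 * S) * (2 * U)) / (1 + 2 * T) := by
    ring
  rw [hrew, div_lt_one hB0]
  have hTlb : -(0.19918493 : ℝ) + 0.19918493 ^ 4 - 1.25 * 0.19918493 ^ 9 ≤ T := by
    refine le_trans ?_ hT
    nlinarith [pow_nonneg hq0.le 3, pow_nonneg hq0.le 8, hq9,
      mul_nonneg (sub_nonneg.2 hqub) (pow_nonneg hq0.le 3),
      mul_nonneg (sub_nonneg.2 hqub) (mul_nonneg hq0.le hq0.le)]
  have hSub : S ≤ 0.19918493 + 0.19918493 ^ 4 + 1.25 * 0.19918493 ^ 9 := by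
    refine hS.trans ?_; linarith
  have hUub : U ≤ 0.17907917 + 0.17907917 ^ 4 + 1.25 * 0.17907917 ^ 9 := by
    refine hU.trans ?_; linarith
  have hmain : 1.19782 * (1 + 2 * S) * (2 * U)
      ≤ 1.19782 * (1 + 2 * (0.19918493 + 0.19918493 ^ 4 + 1.25 * 0.19918493 ^ 9))
        * (2 * (0.17907917 + 0.17907917 ^ 4 + 1.25 * 0.17907917 ^ 9)) := by
    nlinarith [hSub, hUub, hU0, hS0]
  refine lt_of_le_of_lt hmain ?_
  refine lt_of_lt_of_le ?_
    (by linarith : 1 + 2 * (-(0.19918493 : ℝ) + 0.19918493 ^ 4 - 1.25 * 0.19918493 ^ 9)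
      ≤ 1 + 2 * T)
  norm_num
end
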